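/- arXiv:0705.2823 — 4 statements merged into one kernel-verified Lean document; each statement's English description precedes it below -/
import Mathlib

section
/- The q-analog of the binomial coefficient satisfies: the cyclotomic polynomial φ_d(q) divides the Gaussian binomial coefficient [n choose k]_q if and only if d does not divide k, whenever d divides n and 0 ≤ k ≤ n. (Here we assume d > 1.) -/
/-!
Let `v` be the multiplicity of the prime `φ_d` in `ℚ[X]`. Since `[m]_q` divides the squarefree
polynomial `X ^ m - 1 = ∏_{e ∣ m} φ_e`, `v [m]_q` is `1` if `d ∣ m` and `0` otherwise, so
`v [m]_q! = ⌊m / d⌋`. Hence `v [n choose k]_q = ⌊n / d⌋ - ⌊k / d⌋ - ⌊(n - k) / d⌋`, which for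
`d ∣ n` is `0` when `d ∣ k` and `1` otherwise.
-/

open Polynomial Finset

/-- The q-analog `[m]_q = 1 + q + ⋯ + q^{m-1}` as a polynomial over `ℚ`. -/
noncomputable def qAnalog (m : ℕ) : Polynomial ℚ := ∑ i ∈ Finset.range m, X ^ i

/-- The q-factorial `[m]_q! = ∏_{i=1}^m [i]_q`. -/
noncomputable def qFactorial (m : ℕ) : Polynomial ℚ :=
  ∏ i ∈ Finset.range m, qAnalog (i + 1)

/-- The Gaussian binomial coefficient `[n choose k]_q = [n]_q! / ([k]_q! [n-k]_q!)`,
defined via division by the (monic) denominator. -/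
noncomputable def qBinom (n k : ℕ) : Polynomial ℚ :=
  qFactorial n /ₘ (qFactorial k * qFactorial (n - k))

lemma Nat.div_eq_div_add_sub_div_add_ite {n d k : ℕ} (hdn : d ∣ n) (hk : k ≤ n) :
    n / d = k / d + (n - k) / d + if d ∣ k then 0 else 1 := by
  obtain rfl | hd := Nat.eq_zero_or_pos d
  · simp_all
  have hn : n = k + (n - k) := by omega
  split_ifs with hdk
  · rw [add_zero, ← Nat.add_div_of_dvd_right hdk, ← hn]
  · conv_lhs => rw [hn]
    refine Nat.add_div_eq_of_le_mod_add_mod ?_ hd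
    have hmod := Nat.add_mod_add_ite k (n - k) d
    rw [← hn, Nat.mod_eq_zero_of_dvd hdn] at hmod
    have : k % d ≠ 0 := fun h => hdk (Nat.dvd_of_mod_eq_zero h)
    split_ifs at hmod <;> omega

lemma qAnalog_mul_X_sub_one (m : ℕ) : qAnalog m * (X - 1) = X ^ m - 1 :=
  geom_sum_mul X m

lemma qAnalog_add (a b : ℕ) : qAnalog (a + b) = qAnalog a + X ^ a * qAnalog b := by
  simp only [qAnalog, Finset.sum_range_add, Finset.mul_sum, pow_add]

lemma qFactorial_succ (m : ℕ) : qFactorial (m + 1) = qFactorial m * qAnalog (m + 1) :=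
  Finset.prod_range_succ _ _

lemma monic_qFactorial (m : ℕ) : (qFactorial m).Monic :=
  monic_prod_of_monic _ _ fun i _ => monic_geom_sum_X i.succ_ne_zero

/-- `[a+b+2]_q = [a+1]_q + q^{a+1} [b+1]_q` splits `[a+b+2]_q!` into two summands, each divisible
by `[a+1]_q! [b+1]_q!` by induction. -/
lemma qFactorial_mul_qFactorial_dvd (a b : ℕ) :
    qFactorial a * qFactorial b ∣ qFactorial (a + b) := by
  induction a generalizing b with
  | zero => simp [qFactorial]
  | succ a iha =>
    induction b with
    | zero => simp [qFactorial]
    | succ b ihb =>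
      have hsplit : qFactorial (a + 1 + (b + 1)) =
          qFactorial (a + (b + 1)) * qAnalog (a + 1) +
            X ^ (a + 1) * (qFactorial (a + 1 + b) * qAnalog (b + 1)) := by
        have e : a + 1 + (b + 1) = a + 1 + b + 1 := by omega
        rw [e, qFactorial_succ, ← e, qAnalog_add, show a + (b + 1) = a + 1 + b by omega]
        ring
      rw [hsplit]
      refine dvd_add ?_ (Dvd.dvd.mul_left ?_ _)
      · rw [qFactorial_succ a]
        exact (dvd_of_eq (by ring)).trans (mul_dvd_mul_right (iha (b + 1)) _)
      · rw [qFactorial_succ b]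
        exact (dvd_of_eq (by ring)).trans (mul_dvd_mul_right ihb _)

lemma qBinom_mul_qFactorial_mul_qFactorial {n k : ℕ} (hk : k ≤ n) :
    qBinom n k * (qFactorial k * qFactorial (n - k)) = qFactorial n := by
  obtain ⟨c, hc⟩ : qFactorial k * qFactorial (n - k) ∣ qFactorial n := by
    simpa [Nat.add_sub_cancel' hk] using qFactorial_mul_qFactorial_dvd k (n - k)
  rw [qBinom, hc, mul_divByMonic_cancel_left _ ((monic_qFactorial k).mul (monic_qFactorial _)),
    mul_comm]

lemma prime_cyclotomic_rat {d : ℕ} (hd : 0 < d) : Prime (cyclotomic d ℚ) :=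
  (cyclotomic.irreducible_rat hd).prime

/-- `X ^ m - 1` is the product of the pairwise coprime primes `φ_i` for `i ∣ m`. -/
lemma cyclotomic_rat_dvd_X_pow_sub_one_iff {d m : ℕ} (hd : 0 < d) (hm : 0 < m) :
    cyclotomic d ℚ ∣ X ^ m - 1 ↔ d ∣ m := by
  refine ⟨fun h => ?_, fun h => (cyclotomic.dvd_X_pow_sub_one d ℚ).trans
    (dvd_pow_sub_one_of_dvd h)⟩
  rw [← prod_cyclotomic_eq_X_pow_sub_one hm] at h
  obtain ⟨i, hi, hdvd⟩ := ((prime_cyclotomic_rat hd).dvd_finsetProd_iff _).1 h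
  obtain rfl | hne := eq_or_ne d i
  · exact Nat.dvd_of_mem_divisors hi
  · exact absurd ((cyclotomic.isCoprime_rat hne).isUnit_of_dvd' dvd_rfl hdvd)
      (prime_cyclotomic_rat hd).not_isUnit

lemma cyclotomic_rat_dvd_qAnalog_iff {d m : ℕ} (hd : 1 < d) (hm : 0 < m) :
    cyclotomic d ℚ ∣ qAnalog m ↔ d ∣ m := by
  refine ⟨fun h => ?_, fun h => cyclotomic_dvd_geom_sum_of_dvd ℚ h hd.ne'⟩
  rw [← cyclotomic_rat_dvd_X_pow_sub_one_iff (by omega) hm, ← qAnalog_mul_X_sub_one]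
  exact h.mul_right _

/-- The multiplicity is at most one because `[m]_q` divides the squarefree `X ^ m - 1`. -/
lemma emultiplicity_cyclotomic_rat_qAnalog {d m : ℕ} (hd : 1 < d) (hm : 0 < m) :
    emultiplicity (cyclotomic d ℚ) (qAnalog m) = if d ∣ m then 1 else 0 := by
  split_ifs with hdm
  · rw [← Nat.cast_one, emultiplicity_eq_coe, pow_one, cyclotomic_rat_dvd_qAnalog_iff hd hm]
    refine ⟨hdm, fun hsq => (prime_cyclotomic_rat (d := d) (by omega)).not_isUnit ?_⟩
    have hsf : Squarefree (X ^ m - 1 : ℚ[X]) :=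
      (X_pow_sub_one_separable_iff.2 (by exact_mod_cast hm.ne')).squarefree
    rw [← qAnalog_mul_X_sub_one] at hsf
    exact hsf _ (by rw [← pow_two]; exact hsq.mul_right _)
  · rwa [emultiplicity_eq_zero, cyclotomic_rat_dvd_qAnalog_iff hd hm]

lemma emultiplicity_cyclotomic_rat_qFactorial {d : ℕ} (hd : 1 < d) (m : ℕ) :
    emultiplicity (cyclotomic d ℚ) (qFactorial m) = (m / d : ℕ) := by
  rw [qFactorial, Finset.emultiplicity_prod (prime_cyclotomic_rat (by omega))]
  simp only [emultiplicity_cyclotomic_rat_qAnalog hd (Nat.succ_pos _), Finset.sum_boole,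
    Nat.card_multiples]

lemma emultiplicity_cyclotomic_rat_qBinom {n d k : ℕ} (hdn : d ∣ n) (hd : 1 < d) (hk : k ≤ n) :
    emultiplicity (cyclotomic d ℚ) (qBinom n k) = if d ∣ k then 0 else 1 := by
  have h := congrArg (emultiplicity (cyclotomic d ℚ)) (qBinom_mul_qFactorial_mul_qFactorial hk)
  rw [emultiplicity_mul (prime_cyclotomic_rat (by omega)),
    emultiplicity_mul (prime_cyclotomic_rat (by omega)),
    emultiplicity_cyclotomic_rat_qFactorial hd, emultiplicity_cyclotomic_rat_qFactorial hd,
    emultiplicity_cyclotomic_rat_qFactorial hd, Nat.div_eq_div_add_sub_div_add_ite hdn hk] at h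
  generalize emultiplicity (cyclotomic d ℚ) (qBinom n k) = e at h ⊢
  induction e using ENat.recTopCoe with
  | top => split_ifs at h <;> simp [eq_comm] at h
  | coe e => split_ifs at h ⊢ <;> norm_cast at h ⊢ <;> omega

/-- For a divisor `d > 1` of `n` and `0 ≤ k ≤ n`, the cyclotomic polynomial `φ_d(q)`
divides `[n choose k]_q` if and only if `d` does not divide `k`. -/
theorem stmt_0 (n d k : ℕ) (hdn : d ∣ n) (hd : 1 < d) (hk : k ≤ n) :
    cyclotomic d ℚ ∣ qBinom n k ↔ ¬ d ∣ k := by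
  rw [← not_iff_not, not_not, ← emultiplicity_eq_zero,
    emultiplicity_cyclotomic_rat_qBinom hdn hd hk]
  split_ifs <;> simpa
end

section
/- The group G_{B_n} (Artin group of type B_n) is isomorphic to the semidirect product G_{Ã_{n-1}} ⋊ ℤ, where G_{Ã_{n-1}} is the Artin group of affine type Ã_{n-1}; equivalently, G_{B_n} admits the presentation with generators τ, ε_1, ..., ε_n and relations ε_i ε_j = ε_j ε_i for nonadjacent indices mod n, ε_i ε_{i+1} ε_i = ε_{i+1} ε_i ε_{i+1} (indices mod n), and τ^{-1} ε_i τ = ε_{i+1} (indices mod n). -/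
/-!
Put `τ = ε̄_n ε_{n-1} ⋯ ε_1` and `ε_{k+1} = τ^{-k} ε_1 τ^k`. The braid relations among
`ε_1, …, ε_{n-1}` give `τ⁻¹ ε_i τ = ε_{i+1}` for `i ≤ n - 2`, so the new `ε_i` agree with the
standard ones, and together with the length-four relation they give `τ⁻² ε_{n-1} τ² = ε_1`:
the family `ε_k` is `n`-periodic, and every relation of the Peifer presentation is a
`τ`-conjugate of a relation among `ε_1, …, ε_{n-1}`. Conversely, in the Peifer presentation
`ε̄_n := τ (ε_{n-1} ⋯ ε_1)⁻¹` satisfies the type-`B` relations; the length-four one holds because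
`(ε_{n-1} ε̄_n)² = τ² ε_1² (ε_{n-1} ⋯ ε_1)⁻²` commutes with `ε_{n-1}`. The two maps are mutually
inverse on generators. Finally, the Peifer presentation is the standard presentation of the
semidirect product of `G_{Ã_{n-1}}` by `ℤ` acting through the cyclic shift of the generators.
-/

open FreeGroup

/-- The defining relations of the Artin group of type `Bₙ` on generators
`ε_1, …, ε_{n-1}, ε̄_n` (indexed by `Fin n`; the last index corresponds to `ε̄_n`):
braid relations of length 3 for consecutive generators among the first `n-1`, the braid
relation of length 4 between `ε_{n-1}` and `ε̄_n`, and commutations otherwise. -/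
def artinBRels (n : ℕ) : Set (FreeGroup (Fin n)) :=
  {r | ∃ i j : Fin n, (i : ℕ) + 1 = (j : ℕ) ∧ (j : ℕ) < n - 1 ∧
      r = of i * of j * of i * (of j * of i * of j)⁻¹} ∪
  {r | ∃ i j : Fin n, (i : ℕ) + 1 = (j : ℕ) ∧ (j : ℕ) = n - 1 ∧
      r = of i * of j * of i * of j * (of j * of i * of j * of i)⁻¹} ∪
  {r | ∃ i j : Fin n, (i : ℕ) + 1 < (j : ℕ) ∧ r = of i * of j * (of j * of i)⁻¹}

/-- The Artin group `G_{Bₙ}`. -/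
def ArtinB (n : ℕ) : Type := PresentedGroup (artinBRels n)

instance (n : ℕ) : Group (ArtinB n) := by unfold ArtinB; infer_instance

/-- The defining relations of the affine Artin group `G_{Ã_{n-1}}`: its `n` generators are
arranged in a cycle (indexed by `Fin n` with its cyclic addition), with braid relations
between cyclically adjacent generators and commutation relations otherwise. -/
def artinAffARels (n : ℕ) [NeZero n] : Set (FreeGroup (Fin n)) :=
  {r | ∃ i : Fin n, r = of i * of (i + 1) * of i * (of (i + 1) * of i * of (i + 1))⁻¹} ∪
  {r | ∃ i j : Fin n, i ≠ j ∧ j ≠ i + 1 ∧ i ≠ j + 1 ∧ r = of i * of j * (of j * of i)⁻¹}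

/-- The affine Artin group `G_{Ã_{n-1}}`. -/
def ArtinAffA (n : ℕ) [NeZero n] : Type := PresentedGroup (artinAffARels n)

instance (n : ℕ) [NeZero n] : Group (ArtinAffA n) := by unfold ArtinAffA; infer_instance

/-- The Peifer presentation of `G_{Bₙ}`: generators `ε_1, …, ε_n` (the `Sum.inl` part,
indexed cyclically by `Fin n`) and `τ` (the `Sum.inr` part), with relations
`ε_i ε_j = ε_j ε_i` for non-adjacent indices mod `n`,
`ε_i ε_{i+1} ε_i = ε_{i+1} ε_i ε_{i+1}` (indices mod `n`), and
`τ⁻¹ ε_i τ = ε_{i+1}` (indices mod `n`). -/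
def peiferRels (n : ℕ) [NeZero n] : Set (FreeGroup (Fin n ⊕ Unit)) :=
  {r | ∃ i : Fin n, r = of (Sum.inl i) * of (Sum.inl (i + 1)) * of (Sum.inl i) *
      (of (Sum.inl (i + 1)) * of (Sum.inl i) * of (Sum.inl (i + 1)))⁻¹} ∪
  {r | ∃ i j : Fin n, i ≠ j ∧ j ≠ i + 1 ∧ i ≠ j + 1 ∧
      r = of (Sum.inl i) * of (Sum.inl j) * (of (Sum.inl j) * of (Sum.inl i))⁻¹} ∪
  {r | ∃ i : Fin n, r = (of (Sum.inr ()))⁻¹ * of (Sum.inl i) * of (Sum.inr ()) *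
      (of (Sum.inl (i + 1)))⁻¹}

section DescProd

variable {G : Type*} [Group G]

def descProd (x : ℕ → G) : ℕ → G
  | 0 => 1
  | k + 1 => x k * descProd x k

@[simp] lemma descProd_zero (x : ℕ → G) : descProd x 0 = 1 := rfl

lemma descProd_succ (x : ℕ → G) (k : ℕ) : descProd x (k + 1) = x k * descProd x k := rfl

lemma map_descProd {H : Type*} [Group H] (f : G →* H) (x : ℕ → G) (k : ℕ) :
    f (descProd x k) = descProd (f ∘ x) k := by
  induction k with
  | zero => exact map_one f
  | succ k ih => rw [descProd_succ, _root_.map_mul, ih, descProd_succ, Function.comp_apply]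

lemma descProd_congr {x y : ℕ → G} {k : ℕ} (h : ∀ i < k, x i = y i) :
    descProd x k = descProd y k := by
  induction k with
  | zero => rfl
  | succ k ih =>
    rw [descProd_succ, descProd_succ, h k k.lt_succ_self, ih fun i hi => h i (by omega)]

lemma descProd_mul_of_shift {x : ℕ → G} {t : G} (h : ∀ k, x k * t = t * x (k + 1)) (k : ℕ) :
    descProd x k * t = t * descProd x (k + 1) * (x 0)⁻¹ := by
  induction k with
  | zero => simp [descProd_succ]
  | succ k ih =>
    rw [descProd_succ, mul_assoc, ih, ← mul_assoc, ← mul_assoc, h k, descProd_succ _ (k + 1)]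
    group

/-- `x 0, …, x (M - 1)` satisfy the defining relations of the braid group on `M + 1` strands. -/
structure BraidRels (x : ℕ → G) (M : ℕ) : Prop where
  braid : ∀ i, i + 2 ≤ M → x i * x (i + 1) * x i = x (i + 1) * x i * x (i + 1)
  comm : ∀ i j, i + 1 < j → j < M → Commute (x i) (x j)

variable {x : ℕ → G} {M : ℕ}

lemma BraidRels.mono {N : ℕ} (h : BraidRels x M) (hNM : N ≤ M) : BraidRels x N :=
  ⟨fun i hi => h.braid i (hi.trans hNM), fun i j hij hj => h.comm i j hij (by omega)⟩

lemma commute_descProd {j k : ℕ} (h : ∀ i < k, Commute (x j) (x i)) :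
    Commute (x j) (descProd x k) := by
  induction k with
  | zero => exact Commute.one_right _
  | succ k ih => exact (h k k.lt_succ_self).mul_right (ih fun i hi => h i (by omega))

lemma BraidRels.commute_descProd (h : BraidRels x M) {j k : ℕ} (hkj : k < j) (hj : j < M) :
    Commute (x j) (descProd x k) :=
  _root_.commute_descProd fun i hi => (h.comm i j (by omega) hj).symm

lemma BraidRels.mul_descProd (h : BraidRels x M) {i m : ℕ} (hi : i + 2 ≤ m) (hm : m ≤ M) :
    x i * descProd x m = descProd x m * x (i + 1) := by
  induction m with
  | zero => omega
  | succ m ih =>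
    rw [descProd_succ]
    rcases (show i + 2 ≤ m ∨ m = i + 1 by omega) with him | rfl
    · rw [← mul_assoc, (h.comm i m (by omega) (by omega)).eq, mul_assoc, ih him (by omega),
        mul_assoc]
    · have hQ := (h.commute_descProd (Nat.lt_succ_self i) (by omega)).eq
      calc x i * (x (i + 1) * (x i * descProd x i))
          = x i * x (i + 1) * x i * descProd x i := by group
        _ = x (i + 1) * x i * (x (i + 1) * descProd x i) := by rw [h.braid i hm]; group
        _ = x (i + 1) * (x i * descProd x i) * x (i + 1) := by rw [hQ]; group

lemma BraidRels.mul_descProd_mul_descProd {k : ℕ} (h : BraidRels x (k + 1)) :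
    x k * (descProd x k * descProd x (k + 1)) = descProd x k * descProd x (k + 1) * x 0 := by
  induction k with
  | zero => simp [descProd_succ]
  | succ k ih =>
    have ih := ih (h.mono (by omega))
    have hQ := (h.commute_descProd (Nat.lt_succ_self k) (by omega)).eq
    simp only [descProd_succ] at ih hQ ⊢
    set a := x k
    set b := x (k + 1)
    set Q := descProd x k
    have hb : b * a * b = a * b * a := (h.braid k le_rfl).symm
    calc b * (a * Q * (b * (a * Q)))
        = b * a * (b * Q) * (a * Q) := by rw [hQ]; group
      _ = b * a * b * (Q * (a * Q)) := by group
      _ = a * b * (a * (Q * (a * Q))) := by rw [hb]; group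
      _ = a * (b * Q) * (a * Q) * x 0 := by rw [ih]; group
      _ = a * Q * (b * (a * Q)) * x 0 := by rw [hQ]; group

lemma BraidRels.mul_descProd_sq {k : ℕ} (h : BraidRels x (k + 1)) :
    x k * (descProd x (k + 1) * descProd x (k + 1)) =
      descProd x (k + 1) * descProd x (k + 1) * x 0 := by
  have h' := h.mul_descProd_mul_descProd
  calc x k * (descProd x (k + 1) * descProd x (k + 1))
      = x k * (x k * (descProd x k * descProd x (k + 1))) := by rw [descProd_succ x k]; group
    _ = descProd x (k + 1) * descProd x (k + 1) * x 0 := by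
      rw [h', descProd_succ x k]; group

end DescProd

namespace PresentedGroup

variable {α : Type*} {rels : Set (FreeGroup α)}

@[simp] lemma mk_of (x : α) : mk rels (FreeGroup.of x) = of x := rfl

lemma lift_of_eq_one_of_mem {G : Type*} [Group G] (φ : PresentedGroup rels →* G)
    {r : FreeGroup α} (hr : r ∈ rels) : FreeGroup.lift (fun x => φ (of x)) r = 1 := by
  rw [← FreeGroup.lift_unique (f := fun x => φ (of x)) (φ.comp (mk rels)) fun _ => rfl,
    MonoidHom.comp_apply, one_of_mem hr, _root_.map_one]

lemma map_freeGroupMap_of {β : Type*} {t : Set (FreeGroup β)} (f : α → β)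
    (h : rels.MapsTo (FreeGroup.map f) t) (x : α) :
    PresentedGroup.map (FreeGroup.map f) h (of x) = of (f x) :=
  congrArg (mk t) FreeGroup.map.of

def autOfPerm (e : Equiv.Perm α) (h : rels.MapsTo (FreeGroup.map e) rels)
    (h' : rels.MapsTo (FreeGroup.map e.symm) rels) : MulAut (PresentedGroup rels) :=
  MonoidHom.toMulEquiv (PresentedGroup.map _ h) (PresentedGroup.map _ h')
    (ext fun x => by
      rw [MonoidHom.comp_apply, map_freeGroupMap_of, map_freeGroupMap_of, e.symm_apply_apply]; rfl)
    (ext fun x => by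
      rw [MonoidHom.comp_apply, map_freeGroupMap_of, map_freeGroupMap_of, e.apply_symm_apply]; rfl)

lemma autOfPerm_of (e : Equiv.Perm α) (h : rels.MapsTo (FreeGroup.map e) rels)
    (h' : rels.MapsTo (FreeGroup.map e.symm) rels) (x : α) :
    autOfPerm e h h' (of x) = of (e x) :=
  map_freeGroupMap_of _ h x

end PresentedGroup

open scoped Fin.NatCast

lemma Fin.natCast_ne_natCast {n a b : ℕ} [NeZero n] (ha : a < n) (hb : b < n) (hab : a ≠ b) :
    (a : Fin n) ≠ b := by
  rw [Ne, Fin.ext_iff, Fin.val_cast_of_lt ha, Fin.val_cast_of_lt hb]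
  exact hab

section SemidirectInt

variable {N H : Type*} [Group N] [Group H]

lemma map_zpow_apply_of_map_apply {f : N →* H} {σ : MulAut N} {s : H}
    (h : ∀ x, f (σ x) = s * f x * s⁻¹) (k : ℤ) (x : N) :
    f ((σ ^ k) x) = s ^ k * f x * (s ^ k)⁻¹ := by
  induction k using Int.induction_on generalizing x with
  | zero => simp
  | succ k ih => rw [zpow_add_one, MulAut.mul_apply, ih, h, zpow_add_one]; group
  | pred k ih =>
    have hσ : f (σ⁻¹ x) = s⁻¹ * f x * s := by
      have := h (σ⁻¹ x)
      rw [MulAut.inv_apply, MulEquiv.apply_symm_apply] at this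
      rw [this, MulAut.inv_apply]; group
    rw [zpow_sub_one, MulAut.mul_apply, ih, hσ, zpow_sub_one]; group

def SemidirectProduct.liftZPowers (f : N →* H) (σ : MulAut N) (s : H)
    (h : ∀ x, f (σ x) = s * f x * s⁻¹) :
    N ⋊[zpowersHom _ σ] Multiplicative ℤ →* H :=
  SemidirectProduct.lift f (zpowersHom H s) fun g => MonoidHom.ext fun x => by
    simp only [MonoidHom.comp_apply, MulEquiv.coe_toMonoidHom, zpowersHom_apply,
      MulAut.conj_apply, map_zpow_apply_of_map_apply h]

end SemidirectInt

namespace ArtinB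

variable (m : ℕ)

/-- The standard generator `ε_{i+1}` of `G_{B_{m+3}}`; `gen m (m + 2)` is `ε̄_{m+3}`. -/
def gen (i : ℕ) : PresentedGroup (artinBRels (m + 3)) := PresentedGroup.of (i : Fin (m + 3))

lemma braidRels_gen : BraidRels (gen m) (m + 2) where
  braid i hi := by
    have h := PresentedGroup.mk_eq_mk_of_mul_inv_mem (rels := artinBRels (m + 3))
      (Or.inl (Or.inl ⟨(i : Fin (m + 3)), ((i + 1 : ℕ) : Fin (m + 3)),
        by simp only [Fin.val_cast_of_lt (show i < m + 3 by omega),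
          Fin.val_cast_of_lt (show i + 1 < m + 3 by omega)],
        by rw [Fin.val_cast_of_lt (by omega)]; omega, rfl⟩))
    simpa only [_root_.map_mul, PresentedGroup.mk_of, gen, commute_iff_eq] using h
  comm i j hij hj := by
    have h := PresentedGroup.mk_eq_mk_of_mul_inv_mem (rels := artinBRels (m + 3))
      (Or.inr ⟨(i : Fin (m + 3)), (j : Fin (m + 3)),
        by rw [Fin.val_cast_of_lt (by omega), Fin.val_cast_of_lt (by omega)]; omega, rfl⟩)
    simpa only [_root_.map_mul, PresentedGroup.mk_of, gen, commute_iff_eq] using h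

lemma commute_gen_last {i : ℕ} (hi : i ≤ m) : Commute (gen m i) (gen m (m + 2)) := by
  have h := PresentedGroup.mk_eq_mk_of_mul_inv_mem (rels := artinBRels (m + 3))
    (Or.inr ⟨(i : Fin (m + 3)), ((m + 2 : ℕ) : Fin (m + 3)),
      by rw [Fin.val_cast_of_lt (by omega), Fin.val_cast_of_lt (by omega)]; omega, rfl⟩)
  simpa only [_root_.map_mul, PresentedGroup.mk_of, gen, commute_iff_eq] using h

lemma gen_four :
    gen m (m + 1) * gen m (m + 2) * gen m (m + 1) * gen m (m + 2) =
      gen m (m + 2) * gen m (m + 1) * gen m (m + 2) * gen m (m + 1) := by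
  have h := PresentedGroup.mk_eq_mk_of_mul_inv_mem (rels := artinBRels (m + 3))
    (Or.inl (Or.inr ⟨((m + 1 : ℕ) : Fin (m + 3)), ((m + 2 : ℕ) : Fin (m + 3)),
      by rw [Fin.val_cast_of_lt (by omega), Fin.val_cast_of_lt (by omega)],
      by rw [Fin.val_cast_of_lt (by omega)]; omega, rfl⟩))
  simpa only [_root_.map_mul, PresentedGroup.mk_of, gen, commute_iff_eq] using h

def tau : PresentedGroup (artinBRels (m + 3)) := descProd (gen m) (m + 3)

lemma tau_eq : tau m = gen m (m + 2) * descProd (gen m) (m + 2) := rfl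

lemma gen_mul_tau {i : ℕ} (hi : i ≤ m) : gen m i * tau m = tau m * gen m (i + 1) := by
  rw [tau_eq, ← mul_assoc, (commute_gen_last m hi).eq, mul_assoc,
    (braidRels_gen m).mul_descProd (by omega) le_rfl, mul_assoc]

lemma gen_mul_tau_sq : gen m (m + 1) * (tau m * tau m) = tau m * tau m * gen m 0 := by
  have hQ : Commute (gen m (m + 2)) (descProd (gen m) (m + 1)) :=
    commute_descProd fun i hi => (commute_gen_last m (by omega)).symm
  have hL := (braidRels_gen m).mul_descProd_mul_descProd
  have h4 := gen_four m
  rw [tau_eq, descProd_succ]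
  rw [descProd_succ _ (m + 1)] at hL
  set a := gen m (m + 1)
  set c := gen m (m + 2)
  set Q := descProd (gen m) (m + 1)
  calc a * (c * (a * Q) * (c * (a * Q)))
      = a * c * a * (c * Q) * (a * Q) := by rw [hQ.eq]; group
    _ = a * c * a * c * (Q * (a * Q)) := by group
    _ = c * a * c * (a * (Q * (a * Q))) := by rw [h4]; group
    _ = c * a * (c * Q) * (a * Q) * gen m 0 := by rw [hL]; group
    _ = c * (a * Q) * (c * (a * Q)) * gen m 0 := by rw [hQ.eq]; group

/-- `cyc m k = ε_{k+1}` in the paper's notation, indices read modulo `m + 3`. -/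
def cyc (k : ℕ) : PresentedGroup (artinBRels (m + 3)) := (tau m ^ k)⁻¹ * gen m 0 * tau m ^ k

lemma cyc_succ (k : ℕ) : cyc m (k + 1) = (tau m)⁻¹ * cyc m k * tau m := by
  simp only [cyc, pow_succ]; group

lemma cyc_add (k d : ℕ) : cyc m (k + d) = MulAut.conj (tau m ^ k)⁻¹ (cyc m d) := by
  simp only [cyc, MulAut.conj_apply, add_comm k d, pow_add]; group

lemma cyc_eq_gen {k : ℕ} (hk : k ≤ m + 1) : cyc m k = gen m k := by
  induction k with
  | zero => simp [cyc]
  | succ k ih =>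
    rw [cyc_succ, ih (by omega), mul_assoc, gen_mul_tau m (by omega)]
    group

lemma cyc_periodic : Function.Periodic (cyc m) (m + 3) := by
  have h : cyc m (m + 3) = gen m 0 := by
    show cyc m (m + 1 + 1 + 1) = _
    rw [cyc_succ, cyc_succ, cyc_eq_gen m le_rfl]
    calc (tau m)⁻¹ * ((tau m)⁻¹ * gen m (m + 1) * tau m) * tau m
        = (tau m * tau m)⁻¹ * (gen m (m + 1) * (tau m * tau m)) := by group
      _ = gen m 0 := by rw [gen_mul_tau_sq]; group
  intro k
  rw [cyc_add, h, ← cyc_eq_gen m (Nat.zero_le _), ← cyc_add, add_zero]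

lemma cyc_val_add_one (i : Fin (m + 3)) : cyc m ((i + 1 : Fin (m + 3)) : ℕ) = cyc m (i + 1) := by
  rw [Fin.val_add, Fin.val_one, (cyc_periodic m).map_mod_nat]

lemma cyc_braid (k : ℕ) :
    cyc m k * cyc m (k + 1) * cyc m k = cyc m (k + 1) * cyc m k * cyc m (k + 1) := by
  have hk : cyc m k = MulAut.conj (tau m ^ k)⁻¹ (gen m 0) := by
    rw [← cyc_eq_gen m (Nat.zero_le _), ← cyc_add, add_zero]
  rw [hk, cyc_add, cyc_eq_gen m (by omega), ← _root_.map_mul, ← _root_.map_mul, ← _root_.map_mul,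
    ← _root_.map_mul, (braidRels_gen m).braid 0 (by omega), Nat.zero_add]

lemma commute_cyc_add {d : ℕ} (hd : 2 ≤ d) (hdm : d ≤ m + 1) (k : ℕ) :
    Commute (cyc m k) (cyc m (k + d)) := by
  have hk : cyc m k = MulAut.conj (tau m ^ k)⁻¹ (gen m 0) := by
    rw [← cyc_eq_gen m (Nat.zero_le _), ← cyc_add, add_zero]
  rw [hk, cyc_add, cyc_eq_gen m hdm]
  exact ((braidRels_gen m).comm 0 d (by omega) (by omega)).map _

lemma commute_cyc_of_not_adj {i j : Fin (m + 3)} (h1 : i ≠ j) (h2 : j ≠ i + 1)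
    (h3 : i ≠ j + 1) : Commute (cyc m i) (cyc m j) := by
  wlog hij : i < j generalizing i j
  · exact (this h1.symm h3 h2 (lt_of_le_of_ne (not_lt.mp hij) h1.symm)).symm
  rw [Ne, Fin.ext_iff, Fin.val_add, Fin.val_one] at h2 h3
  rw [Fin.lt_def] at hij
  obtain ⟨d, hd⟩ : ∃ d, (j : ℕ) = i + d := ⟨j - i, by omega⟩
  have hi := i.isLt
  have hj := j.isLt
  rw [hd]
  refine commute_cyc_add m ?_ ?_ i
  · rw [Nat.mod_eq_of_lt (by omega)] at h2; omega
  · rcases Nat.lt_or_ge (j : ℕ) (m + 2) with hjm | hjm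
    · omega
    · rw [show (j : ℕ) + 1 = m + 3 by omega, Nat.mod_self] at h3; omega

end ArtinB

namespace Peifer

section

variable (n : ℕ) [NeZero n]

def tau : PresentedGroup (peiferRels n) := PresentedGroup.of (Sum.inr ())

lemma of_mul_tau (i : Fin n) :
    PresentedGroup.of (Sum.inl i) * tau n = tau n * PresentedGroup.of (Sum.inl (i + 1)) := by
  have h := PresentedGroup.mk_eq_mk_of_mul_inv_mem (rels := peiferRels n) (Or.inr ⟨i, rfl⟩)
  simp only [_root_.map_mul, PresentedGroup.mk_of] at h
  rw [← inv_mul_eq_iff_eq_mul, ← mul_assoc]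
  exact h

end

variable (m : ℕ)

/-- The generator `ε_{k+1}`, indices read modulo `m + 3`. -/
def gen (k : ℕ) : PresentedGroup (peiferRels (m + 3)) :=
  PresentedGroup.of (Sum.inl (k : Fin (m + 3)))

lemma gen_mul_tau (k : ℕ) : gen m k * tau (m + 3) = tau (m + 3) * gen m (k + 1) := by
  rw [gen, gen, Nat.cast_add_one]
  exact of_mul_tau _ _

lemma gen_periodic : Function.Periodic (gen m) (m + 3) := fun k => by
  rw [gen, Nat.cast_add k (m + 3), Fin.natCast_self, add_zero, gen]

lemma braidRels_gen : BraidRels (gen m) (m + 2) where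
  braid i _ := by
    have h := PresentedGroup.mk_eq_mk_of_mul_inv_mem (rels := peiferRels (m + 3))
      (Or.inl (Or.inl ⟨(i : Fin (m + 3)), rfl⟩))
    simpa only [_root_.map_mul, PresentedGroup.mk_of, gen, Nat.cast_add_one] using h
  comm i j hij hj := by
    have h := PresentedGroup.mk_eq_mk_of_mul_inv_mem (rels := peiferRels (m + 3))
      (Or.inl (Or.inr ⟨(i : Fin (m + 3)), (j : Fin (m + 3)),
        Fin.natCast_ne_natCast (by omega) (by omega) (by omega),
        by rw [← Nat.cast_add_one]; exact Fin.natCast_ne_natCast (by omega) (by omega) (by omega),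
        by rw [← Nat.cast_add_one]; exact Fin.natCast_ne_natCast (by omega) (by omega) (by omega),
        rfl⟩))
    simpa only [_root_.map_mul, PresentedGroup.mk_of, gen, commute_iff_eq] using h

lemma gen_succ (k : ℕ) : gen m (k + 1) = (tau (m + 3))⁻¹ * gen m k * tau (m + 3) := by
  rw [mul_assoc, gen_mul_tau]; group

lemma gen_eq_conj (k : ℕ) : gen m k = (tau (m + 3) ^ k)⁻¹ * gen m 0 * tau (m + 3) ^ k := by
  induction k with
  | zero => simp
  | succ k ih => rw [gen_succ, ih, pow_succ]; group

/-- The image of `ε̄_n`, from `τ = ε̄_n ε_{n-1} ⋯ ε_1`. -/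
def beta : PresentedGroup (peiferRels (m + 3)) := tau (m + 3) * (descProd (gen m) (m + 2))⁻¹

lemma commute_gen_beta {i : ℕ} (hi : i ≤ m) : Commute (gen m i) (beta m) := by
  have hΔ := SemiconjBy.inv_symm_left
    ((braidRels_gen m).mul_descProd (i := i) (by omega) le_rfl).symm
  calc gen m i * beta m = tau (m + 3) * (gen m (i + 1) * (descProd (gen m) (m + 2))⁻¹) := by
        rw [beta, ← mul_assoc, gen_mul_tau, mul_assoc]
    _ = beta m * gen m i := by rw [← hΔ.eq, beta, mul_assoc]

lemma beta_four :
    gen m (m + 1) * beta m * gen m (m + 1) * beta m =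
      beta m * gen m (m + 1) * beta m * gen m (m + 1) := by
  have hac := gen_mul_tau m (m + 1)
  have hcz : gen m (m + 2) * tau (m + 3) = tau (m + 3) * gen m 0 := by
    rw [gen_mul_tau, ← gen_periodic m 0, zero_add]
  have hΔ := descProd_mul_of_shift (gen_mul_tau m) (m + 2)
  rw [descProd_succ _ (m + 2)] at hΔ
  have hΔsq := (braidRels_gen m).mul_descProd_sq (k := m + 1)
  rw [beta]
  set a := gen m (m + 1)
  set c := gen m (m + 2)
  set z := gen m 0
  set Δ := descProd (gen m) (m + 2)
  set u := tau (m + 3)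
  have hΔu : Δ⁻¹ * (u * c) = u * z * Δ⁻¹ := by
    calc Δ⁻¹ * (u * c) = Δ⁻¹ * (u * (c * Δ) * z⁻¹) * z * Δ⁻¹ := by group
      _ = u * z * Δ⁻¹ := by rw [← hΔ]; group
  have hinv : (Δ * Δ)⁻¹ * a = z * (Δ * Δ)⁻¹ := (SemiconjBy.inv_symm_left hΔsq.symm).eq
  -- `a β a β = β a β a` says that `a` commutes with `(a β)²`, which is computed explicitly
  have hsq : a * (u * Δ⁻¹) * (a * (u * Δ⁻¹)) = u * u * (z * z) * (Δ * Δ)⁻¹ := by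
    calc a * (u * Δ⁻¹) * (a * (u * Δ⁻¹)) = a * u * Δ⁻¹ * (a * u) * Δ⁻¹ := by group
      _ = u * c * (Δ⁻¹ * (u * c)) * Δ⁻¹ := by rw [hac]; group
      _ = u * (c * u) * z * Δ⁻¹ * Δ⁻¹ := by rw [hΔu]; group
      _ = u * u * (z * z) * (Δ * Δ)⁻¹ := by rw [hcz]; group
  have hX : a * (u * u * (z * z) * (Δ * Δ)⁻¹) = u * u * (z * z) * (Δ * Δ)⁻¹ * a := by
    calc a * (u * u * (z * z) * (Δ * Δ)⁻¹) = a * u * u * (z * z) * (Δ * Δ)⁻¹ := by group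
      _ = u * (c * u) * (z * z) * (Δ * Δ)⁻¹ := by rw [hac]; group
      _ = u * u * (z * z) * (z * (Δ * Δ)⁻¹) := by rw [hcz]; group
      _ = u * u * (z * z) * (Δ * Δ)⁻¹ * a := by rw [← hinv]; group
  calc a * (u * Δ⁻¹) * a * (u * Δ⁻¹) = u * u * (z * z) * (Δ * Δ)⁻¹ := by rw [← hsq]; group
    _ = a⁻¹ * (u * u * (z * z) * (Δ * Δ)⁻¹ * a) := by rw [← hX]; group
    _ = u * Δ⁻¹ * a * (u * Δ⁻¹) * a := by rw [← hsq]; group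

end Peifer

namespace ArtinB

variable (m : ℕ)

def toPeiferGen (i : Fin (m + 3)) : PresentedGroup (peiferRels (m + 3)) :=
  if (i : ℕ) = m + 2 then Peifer.beta m else Peifer.gen m i

lemma toPeiferGen_of_lt {i : Fin (m + 3)} (hi : (i : ℕ) < m + 2) :
    toPeiferGen m i = Peifer.gen m i :=
  if_neg hi.ne

lemma toPeiferGen_of_eq {i : Fin (m + 3)} (hi : (i : ℕ) = m + 2) :
    toPeiferGen m i = Peifer.beta m :=
  if_pos hi

def toPeifer : PresentedGroup (artinBRels (m + 3)) →* PresentedGroup (peiferRels (m + 3)) :=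
  PresentedGroup.toGroup (f := toPeiferGen m) <| by
    rintro r ((⟨i, j, hij, hj, rfl⟩ | ⟨i, j, hij, hj, rfl⟩) | ⟨i, j, hij, rfl⟩) <;>
      simp only [_root_.map_mul, _root_.map_inv, FreeGroup.lift_apply_of, mul_inv_eq_one]
    · rw [toPeiferGen_of_lt m (by omega), toPeiferGen_of_lt m (by omega), ← hij]
      exact (Peifer.braidRels_gen m).braid i (by omega)
    · rw [toPeiferGen_of_lt m (by omega), toPeiferGen_of_eq m (by omega),
        show (i : ℕ) = m + 1 by omega]
      exact Peifer.beta_four m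
    · rw [toPeiferGen_of_lt m (by omega)]
      rcases Nat.lt_or_ge (j : ℕ) (m + 2) with hj | hj
      · rw [toPeiferGen_of_lt m hj]
        exact ((Peifer.braidRels_gen m).comm i j hij hj).eq
      · rw [toPeiferGen_of_eq m (by omega)]
        exact (Peifer.commute_gen_beta m (by omega)).eq

def ofPeifer : PresentedGroup (peiferRels (m + 3)) →* PresentedGroup (artinBRels (m + 3)) :=
  PresentedGroup.toGroup (rels := peiferRels (m + 3))
      (f := Sum.elim (fun i : Fin (m + 3) => cyc m i) fun _ => tau m) <| by
    rintro r ((⟨i, rfl⟩ | ⟨i, j, h1, h2, h3, rfl⟩) | ⟨i, rfl⟩) <;>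
      simp only [_root_.map_mul, _root_.map_inv, FreeGroup.lift_apply_of, mul_inv_eq_one,
        Sum.elim_inl, Sum.elim_inr, cyc_val_add_one]
    · exact cyc_braid m i
    · exact (commute_cyc_of_not_adj m h1 h2 h3).eq
    · rw [cyc_succ]

lemma toPeifer_gen {k : ℕ} (hk : k < m + 2) : toPeifer m (gen m k) = Peifer.gen m k := by
  have hk' : ((k : Fin (m + 3)) : ℕ) = k := Fin.val_cast_of_lt (by omega)
  rw [gen, toPeifer, PresentedGroup.toGroup.of, toPeiferGen_of_lt m (by omega), hk']

lemma toPeifer_gen_last : toPeifer m (gen m (m + 2)) = Peifer.beta m :=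
  (PresentedGroup.toGroup.of _).trans (toPeiferGen_of_eq m (Fin.val_cast_of_lt (by omega)))

lemma toPeifer_descProd : toPeifer m (descProd (gen m) (m + 2)) = descProd (Peifer.gen m) (m + 2) :=
  (map_descProd _ _ _).trans (descProd_congr fun _ hk => toPeifer_gen m hk)

lemma toPeifer_tau : toPeifer m (tau m) = Peifer.tau (m + 3) := by
  rw [tau_eq, _root_.map_mul, toPeifer_gen_last, toPeifer_descProd, Peifer.beta,
    inv_mul_cancel_right]

lemma ofPeifer_tau : ofPeifer m (Peifer.tau (m + 3)) = tau m :=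
  PresentedGroup.toGroup.of _

lemma ofPeifer_gen (k : ℕ) : ofPeifer m (Peifer.gen m k) = cyc m k := by
  rw [Peifer.gen, ofPeifer, PresentedGroup.toGroup.of, Sum.elim_inl, Fin.val_natCast,
    (cyc_periodic m).map_mod_nat]

lemma ofPeifer_beta : ofPeifer m (Peifer.beta m) = gen m (m + 2) := by
  have h : descProd (ofPeifer m ∘ Peifer.gen m) (m + 2) = descProd (gen m) (m + 2) :=
    descProd_congr fun k hk => (ofPeifer_gen m k).trans (cyc_eq_gen m (by omega))
  rw [Peifer.beta, _root_.map_mul, _root_.map_inv, ofPeifer_tau, map_descProd, h, tau_eq,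
    mul_inv_cancel_right]

lemma toPeifer_cyc (k : ℕ) : toPeifer m (cyc m k) = Peifer.gen m k := by
  rw [cyc, _root_.map_mul, _root_.map_mul, _root_.map_inv, map_pow, toPeifer_tau,
    toPeifer_gen m (by omega), ← Peifer.gen_eq_conj]

def equivPeifer : PresentedGroup (artinBRels (m + 3)) ≃* PresentedGroup (peiferRels (m + 3)) :=
  MonoidHom.toMulEquiv (toPeifer m) (ofPeifer m)
    (PresentedGroup.ext fun i => by
      have hi : PresentedGroup.of i = gen m i := by rw [gen, Fin.cast_val_eq_self]
      rw [MonoidHom.comp_apply, MonoidHom.id_apply, hi]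
      rcases Nat.lt_or_ge (i : ℕ) (m + 2) with hlt | hge
      · rw [toPeifer_gen m hlt, ofPeifer_gen, cyc_eq_gen m (by omega)]
      · rw [show (i : ℕ) = m + 2 by omega, toPeifer_gen_last, ofPeifer_beta])
    (PresentedGroup.ext fun
      | .inl i => by
        have hi : PresentedGroup.of (.inl i) = Peifer.gen m i := by
          rw [Peifer.gen, Fin.cast_val_eq_self]
        rw [MonoidHom.comp_apply, MonoidHom.id_apply, hi, ofPeifer_gen, toPeifer_cyc]
      | .inr () => by
        rw [MonoidHom.comp_apply, MonoidHom.id_apply, ← Peifer.tau, ofPeifer_tau, toPeifer_tau])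

end ArtinB

namespace ArtinAffA

variable {n : ℕ} [NeZero n]

lemma mapsTo_addRight (c : Fin n) :
    (artinAffARels n).MapsTo (FreeGroup.map (Equiv.addRight c)) (artinAffARels n) := by
  rintro r (⟨i, rfl⟩ | ⟨i, j, h1, h2, h3, rfl⟩)
  · refine Or.inl ⟨i + c, ?_⟩
    simp only [_root_.map_mul, _root_.map_inv, FreeGroup.map.of, Equiv.coe_addRight,
      add_right_comm i 1 c]
  · refine Or.inr ⟨i + c, j + c, ?_, ?_, ?_, ?_⟩
    · exact fun h => h1 (add_right_cancel h)
    · exact fun h => h2 (add_right_cancel (h.trans (add_right_comm i 1 c).symm))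
    · exact fun h => h3 (add_right_cancel (h.trans (add_right_comm j 1 c).symm))
    · simp only [_root_.map_mul, _root_.map_inv, FreeGroup.map.of, Equiv.coe_addRight]

variable (n)

def shift : MulAut (PresentedGroup (artinAffARels n)) :=
  PresentedGroup.autOfPerm (Equiv.addRight 1) (mapsTo_addRight 1)
    (by rw [Equiv.addRight_symm]; exact mapsTo_addRight (-1))

lemma shift_of (i : Fin n) : shift n (PresentedGroup.of i) = PresentedGroup.of (i + 1) :=
  PresentedGroup.autOfPerm_of _ _ _ i

end ArtinAffA

namespace Peifer

open SemidirectProduct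

variable (n : ℕ) [NeZero n]

lemma mapsTo_artinAffARels :
    (artinAffARels n).MapsTo (FreeGroup.map Sum.inl) (peiferRels n) := by
  rintro r (⟨i, rfl⟩ | ⟨i, j, h1, h2, h3, rfl⟩)
  · exact Or.inl (Or.inl ⟨i, by simp only [_root_.map_mul, _root_.map_inv, FreeGroup.map.of]⟩)
  · exact Or.inl (Or.inr ⟨i, j, h1, h2, h3,
      by simp only [_root_.map_mul, _root_.map_inv, FreeGroup.map.of]⟩)

def ofAffine : PresentedGroup (artinAffARels n) →* PresentedGroup (peiferRels n) :=
  PresentedGroup.map _ (mapsTo_artinAffARels n)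

lemma ofAffine_of (i : Fin n) :
    ofAffine n (PresentedGroup.of i) = PresentedGroup.of (Sum.inl i) :=
  PresentedGroup.map_freeGroupMap_of _ _ i

lemma ofAffine_shift (x : PresentedGroup (artinAffARels n)) :
    ofAffine n (ArtinAffA.shift n x) = (tau n)⁻¹ * ofAffine n x * (tau n)⁻¹⁻¹ := by
  have h : (ofAffine n).comp (ArtinAffA.shift n).toMonoidHom =
      (MulAut.conj (tau n)⁻¹).toMonoidHom.comp (ofAffine n) :=
    PresentedGroup.ext fun i => by
      rw [MonoidHom.comp_apply, MulEquiv.coe_toMonoidHom, ArtinAffA.shift_of, ofAffine_of,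
        MonoidHom.comp_apply, MulEquiv.coe_toMonoidHom, MulAut.conj_apply, ofAffine_of, inv_inv,
        mul_assoc, of_mul_tau, inv_mul_cancel_left]
  exact DFunLike.congr_fun h x

def toSemidirect : PresentedGroup (peiferRels n) →*
    PresentedGroup (artinAffARels n) ⋊[zpowersHom _ (ArtinAffA.shift n)] Multiplicative ℤ :=
  PresentedGroup.toGroup (f := Sum.elim (fun i => inl (PresentedGroup.of i))
      fun _ => inr (Multiplicative.ofAdd (-1))) <| by
    have hA := fun r => PresentedGroup.lift_of_eq_one_of_mem (rels := artinAffARels n)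
      (inl (G := Multiplicative ℤ) (φ := zpowersHom _ (ArtinAffA.shift n))) (r := r)
    rintro r ((⟨i, rfl⟩ | ⟨i, j, h1, h2, h3, rfl⟩) | ⟨i, rfl⟩)
    · simpa only [_root_.map_mul, _root_.map_inv, FreeGroup.lift_apply_of, Sum.elim_inl]
        using hA _ (Or.inl ⟨i, rfl⟩)
    · simpa only [_root_.map_mul, _root_.map_inv, FreeGroup.lift_apply_of, Sum.elim_inl]
        using hA _ (Or.inr ⟨i, j, h1, h2, h3, rfl⟩)
    · have h := inl_aut (φ := zpowersHom _ (ArtinAffA.shift n)) (Multiplicative.ofAdd 1)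
        (PresentedGroup.of i)
      rw [zpowersHom_apply, toAdd_ofAdd, zpow_one, ArtinAffA.shift_of] at h
      simp only [_root_.map_mul, _root_.map_inv, FreeGroup.lift_apply_of, Sum.elim_inl,
        Sum.elim_inr, h, ofAdd_neg, mul_inv_eq_one]
      group

def ofSemidirect :
    PresentedGroup (artinAffARels n) ⋊[zpowersHom _ (ArtinAffA.shift n)] Multiplicative ℤ →*
      PresentedGroup (peiferRels n) :=
  liftZPowers (ofAffine n) (ArtinAffA.shift n) (tau n)⁻¹ (ofAffine_shift n)

lemma toSemidirect_of_inl (i : Fin n) :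
    toSemidirect n (PresentedGroup.of (Sum.inl i)) = inl (PresentedGroup.of i) :=
  PresentedGroup.toGroup.of _

lemma toSemidirect_tau : toSemidirect n (tau n) = inr (Multiplicative.ofAdd (-1)) :=
  PresentedGroup.toGroup.of _

def equivSemidirect : PresentedGroup (peiferRels n) ≃*
    PresentedGroup (artinAffARels n) ⋊[zpowersHom _ (ArtinAffA.shift n)] Multiplicative ℤ :=
  MonoidHom.toMulEquiv (toSemidirect n) (ofSemidirect n)
    (PresentedGroup.ext fun
      | .inl i => by
        rw [MonoidHom.comp_apply, toSemidirect_of_inl, ofSemidirect, liftZPowers, lift_inl,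
          ofAffine_of, MonoidHom.id_apply]
      | .inr () => by
        rw [MonoidHom.comp_apply, ← tau, toSemidirect_tau, ofSemidirect, liftZPowers, lift_inr,
          zpowersHom_apply, toAdd_ofAdd, zpow_neg_one, inv_inv, MonoidHom.id_apply])
    (hom_ext
      (PresentedGroup.ext fun i => by
        rw [MonoidHom.comp_apply, MonoidHom.comp_apply, ofSemidirect, liftZPowers, lift_inl,
          ofAffine_of, toSemidirect_of_inl, MonoidHom.comp_apply, MonoidHom.id_apply])
      (MonoidHom.ext_mint (by
        rw [MonoidHom.comp_apply, MonoidHom.comp_apply, ofSemidirect, liftZPowers, lift_inr,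
          zpowersHom_apply, toAdd_ofAdd, zpow_one, _root_.map_inv, toSemidirect_tau,
          ← _root_.map_inv, ← ofAdd_neg, neg_neg, MonoidHom.comp_apply, MonoidHom.id_apply])))

end Peifer

/-- `G_{Bₙ}` is isomorphic to the semidirect product `G_{Ã_{n-1}} ⋊ ℤ`, where the generator
of `ℤ` acts on `G_{Ã_{n-1}}` by cyclically shifting the standard generators; equivalently,
`G_{Bₙ}` admits the Peifer presentation with generators `τ, ε_1, …, ε_n`. -/
theorem stmt_16 (n : ℕ) [NeZero n] (hn : 3 ≤ n) :
    (∃ φ : Multiplicative ℤ →* MulAut (ArtinAffA n),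
      (∀ i : Fin n, φ (Multiplicative.ofAdd 1) (PresentedGroup.of i) =
        (PresentedGroup.of (i + 1) : ArtinAffA n)) ∧
      Nonempty (ArtinB n ≃* SemidirectProduct (ArtinAffA n) (Multiplicative ℤ) φ)) ∧
    Nonempty (ArtinB n ≃* PresentedGroup (peiferRels n)) := by
  obtain ⟨m, rfl⟩ : ∃ m, n = m + 3 := ⟨n - 3, by omega⟩
  refine ⟨⟨zpowersHom _ (ArtinAffA.shift (m + 3)), fun i => ?_,
    ⟨(ArtinB.equivPeifer m).trans (Peifer.equivSemidirect (m + 3))⟩⟩, ⟨ArtinB.equivPeifer m⟩⟩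
  exact ArtinAffA.shift_of _ i
end

section
/- In the Artin group G_{B_n} with generators τ, ε_1, ..., ε_{n-1} where τ = ε̄_n ε_{n-1} ⋯ ε_1 (ε̄_n the standard last generator), conjugation by τ shifts the first n-2 standard generators: τ^{-1} ε_i τ = ε_{i+1} for 1 ≤ i < n-1. -/
open FreeGroup

/-- The standard generators of `G_{Bₙ}`. -/
def genB (n : ℕ) (i : Fin n) : ArtinB n := PresentedGroup.of i

/-- The element `τ = ε̄_n ε_{n-1} ⋯ ε_2 ε_1` of `G_{Bₙ}`. -/
def tauB (n : ℕ) : ArtinB n := (((List.finRange n).reverse).map (genB n)).prod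

/-! Write `τ = L · ε_{i+1} ε_i · R` with `L = ε̄_n ⋯ ε_{i+2}` and `R = ε_{i-1} ⋯ ε_1`. The
generator `ε_i` commutes with every factor of `L` and `ε_{i+1}` with every factor of `R`, so the
braid relation gives `ε_i τ = L (ε_i ε_{i+1} ε_i) R = L (ε_{i+1} ε_i ε_{i+1}) R = τ ε_{i+1}`. -/

theorem mul_eq_mul_of_braid {M : Type*} [Monoid M] {x y A B : M} (hA : Commute x A)
    (hB : Commute y B) (hxy : x * y * x = y * x * y) :
    x * (A * (y * x) * B) = A * (y * x) * B * y := calc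
  x * (A * (y * x) * B) = A * (x * y * x) * B := by rw [← mul_assoc, ← mul_assoc, hA.eq]; group
  _ = A * (y * x) * (y * B) := by rw [hxy]; group
  _ = A * (y * x) * B * y := by rw [hB.eq, ← mul_assoc]

theorem List.range_reverse_eq_append {a n : ℕ} (h : a + 2 ≤ n) :
    (List.range n).reverse =
      (List.range' (a + 2) (n - (a + 2))).reverse ++ [a + 1, a] ++ (List.range a).reverse := by
  obtain ⟨m, rfl⟩ := Nat.exists_eq_add_of_le h
  rw [List.range_eq_range', List.range_eq_range', ← List.range'_append, ← List.range'_append]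
  simp [List.range'_succ]

namespace ArtinB

variable {n : ℕ}

theorem genB_braid (i j : Fin n) (hij : (i : ℕ) + 1 = j) (hj : (j : ℕ) < n - 1) :
    genB n i * genB n j * genB n i = genB n j * genB n i * genB n j :=
  PresentedGroup.mk_eq_mk_of_mul_inv_mem (Or.inl (Or.inl ⟨i, j, hij, hj, rfl⟩))

theorem genB_commute (i j : Fin n) (hij : (i : ℕ) + 1 < j) : Commute (genB n i) (genB n j) :=
  PresentedGroup.mk_eq_mk_of_mul_inv_mem (Or.inr ⟨i, j, hij, rfl⟩)

/-- Generators indexed by `ℕ`, so that `τ` can be cut up by arithmetic on `List.range`. -/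
def genNat (n k : ℕ) : ArtinB n := if h : k < n then genB n ⟨k, h⟩ else 1

theorem genNat_of_lt {k : ℕ} (h : k < n) : genNat n k = genB n ⟨k, h⟩ := dif_pos h

theorem genNat_braid {a : ℕ} (h : a + 2 < n) :
    genNat n a * genNat n (a + 1) * genNat n a =
      genNat n (a + 1) * genNat n a * genNat n (a + 1) := by
  rw [genNat_of_lt (by omega : a < n), genNat_of_lt (by omega : a + 1 < n)]
  exact genB_braid _ _ rfl (by simp only; omega)

theorem genNat_commute {a b : ℕ} (hb : b < n) (hab : a + 1 < b) :
    Commute (genNat n a) (genNat n b) := by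
  rw [genNat_of_lt (by omega : a < n), genNat_of_lt hb]
  exact genB_commute _ _ hab

theorem tauB_eq_prod_range : tauB n = ((List.range n).reverse.map (genNat n)).prod := by
  rw [tauB, ← List.map_coe_finRange_eq_range, ← List.map_reverse, List.map_map]
  exact congrArg _ (List.map_congr_left fun i _ => (genNat_of_lt i.isLt).symm)

theorem tauB_eq_mul {a : ℕ} (h : a + 2 ≤ n) :
    tauB n = ((List.range' (a + 2) (n - (a + 2))).reverse.map (genNat n)).prod *
      (genNat n (a + 1) * genNat n a) * ((List.range a).reverse.map (genNat n)).prod := by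
  rw [tauB_eq_prod_range, List.range_reverse_eq_append h]
  simp [List.prod_append, mul_assoc]

end ArtinB

open ArtinB in
/-- In `G_{Bₙ}`, conjugation by `τ = ε̄_n ε_{n-1} ⋯ ε_1` shifts the first `n-2` standard
generators forward: `τ⁻¹ ε_i τ = ε_{i+1}` for `1 ≤ i < n-1` (in the 0-based indexing used
here, for `i` with `i + 2 < n`). -/
theorem stmt_17 (n : ℕ) (i : Fin n) (hi : (i : ℕ) + 2 < n) :
    (tauB n)⁻¹ * genB n i * tauB n = genB n ⟨(i : ℕ) + 1, by omega⟩ := by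
  rw [← genNat_of_lt i.isLt, ← genNat_of_lt, mul_assoc, inv_mul_eq_iff_eq_mul, tauB_eq_mul hi.le]
  refine mul_eq_mul_of_braid ?_ ?_ (genNat_braid hi)
  · refine Commute.list_prod_right _ _ fun x hx => ?_
    simp only [List.mem_map, List.mem_reverse, List.mem_range'_1] at hx
    obtain ⟨k, hk, rfl⟩ := hx
    exact genNat_commute (by omega) (by omega)
  · refine Commute.list_prod_right _ _ fun x hx => ?_
    simp only [List.mem_map, List.mem_reverse, List.mem_range] at hx
    obtain ⟨k, hk, rfl⟩ := hx
    exact (genNat_commute (by omega) (by omega)).symm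
end

section
/- The map sending σ_i ↦ (matrix acting on basis by e_i ↦ u·e_{i+1}, e_{i+1} ↦ e_i, e_j ↦ e_j for j ≠ i, i+1) defines a group homomorphism from the braid group Br_{n+1} = G_{A_n} to GL_{n+1}(ℚ[u^{±1}]) (the Tong–Yang–Ma representation); i.e., the assigned matrices satisfy the braid relations ρ(σ_i)ρ(σ_{i+1})ρ(σ_i) = ρ(σ_{i+1})ρ(σ_i)ρ(σ_{i+1}) and ρ(σ_i)ρ(σ_j) = ρ(σ_j)ρ(σ_i) for |i-j| ≥ 2. -/
/-!
Each `ρ(σ_i)` is a monomial matrix `D_i P_i`, where `P_i` is the permutation matrix of the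
transposition `(i, i+1)` and `D_i` is diagonal with `u` in position `i+1` and `1` elsewhere.
Moving permutation matrices past diagonal ones, `P_σ D = D' P_σ` with `D'` the diagonal
permuted by `σ`, puts any word in the `ρ(σ_i)` in the normal form `D P_π`. Both sides of a
braid or commutation relation then have the same permutation, because transpositions satisfy
these relations in the symmetric group, and the same diagonal part (for the braid relation:
`u` in position `i+1` and `u²` in position `i+2`).
-/

/-- The Tong–Yang–Ma matrix `ρ(σ_i)` over `ℚ[u^{±1}]`: the identity outside the 2×2 block
in rows/columns `i, i+1`, where it is `[[0, 1], [u, 0]]`. -/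
noncomputable def tymMatrix (n : ℕ) (i : Fin n) :
    Matrix (Fin (n + 1)) (Fin (n + 1)) (LaurentPolynomial ℚ) :=
  Matrix.of fun a b =>
    if a = i.castSucc ∧ b = i.succ then 1
    else if a = i.succ ∧ b = i.castSucc then LaurentPolynomial.T 1
    else if a = b ∧ a ≠ i.castSucc ∧ a ≠ i.succ then 1
    else 0

open Equiv LaurentPolynomial

namespace Matrix

variable {n R : Type*} [Fintype n] [DecidableEq n] [Semiring R]

theorem permMatrix_mul_diagonal (σ : Perm n) (d : n → R) :
    σ.permMatrix R * diagonal d = diagonal (d ∘ σ) * σ.permMatrix R := by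
  ext a b
  by_cases h : σ a = b <;> simp [PEquiv.toMatrix_apply, h]

theorem diagonal_mul_permMatrix_mul_diagonal_mul_permMatrix (d e : n → R) (σ τ : Perm n) :
    diagonal d * σ.permMatrix R * (diagonal e * τ.permMatrix R) =
      diagonal (d * e ∘ σ) * (τ * σ).permMatrix R := by
  rw [permMatrix_mul, mul_assoc, ← mul_assoc (σ.permMatrix R), permMatrix_mul_diagonal]
  simp only [← Matrix.mul_assoc, diagonal_mul_diagonal']
  rfl

theorem isUnit_diagonal_mul_permMatrix {d : n → R} (hd : IsUnit d) (σ : Perm n) :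
    IsUnit (diagonal d * σ.permMatrix R) :=
  (hd.map (diagonalRingHom n R)).mul <|
    inv_inv σ ▸ (Group.isUnit σ⁻¹).map (permMatrixHom (R := R))

variable (R) in
/-- The monomial matrix with `e_a ↦ u • e_b`, `e_b ↦ e_a`, fixing the other basis vectors. -/
def scaledSwap (a b : n) (u : R) : Matrix n n R :=
  diagonal (Pi.mulSingle b u) * (Equiv.swap a b).permMatrix R

theorem isUnit_scaledSwap (a b : n) {u : R} (hu : IsUnit u) : IsUnit (scaledSwap R a b u) :=
  isUnit_diagonal_mul_permMatrix (hu.map (MonoidHom.mulSingle (fun _ => R) b)) _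

theorem scaledSwap_mul_scaledSwap_mul_scaledSwap {a b c : n} (hab : a ≠ b) (hac : a ≠ c)
    (hbc : b ≠ c) (u : R) :
    scaledSwap R a b u * scaledSwap R b c u * scaledSwap R a b u =
      scaledSwap R b c u * scaledSwap R a b u * scaledSwap R b c u := by
  simp only [scaledSwap, diagonal_mul_permMatrix_mul_diagonal_mul_permMatrix]
  congr 2
  · simp only [Perm.coe_mul, ← Function.comp_assoc, Pi.mulSingle_comp_equiv, symm_swap,
      swap_apply_left, swap_apply_right, swap_apply_of_ne_of_ne hac.symm hbc.symm]
    have h := Pi.mulSingle_commute (f := fun _ : n => R) hbc u u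
    rw [mul_assoc]
    exact (h.mul_right h).eq
  · rw [← mul_assoc, ← mul_assoc, swap_mul_swap_mul_swap hab hac, Equiv.swap_comm a b,
      Equiv.swap_comm b c, swap_mul_swap_mul_swap hbc.symm hac.symm, Equiv.swap_comm]

theorem scaledSwap_commute {a b c d : n} (hac : a ≠ c) (had : a ≠ d) (hbc : b ≠ c)
    (hbd : b ≠ d) (u v : R) :
    Commute (scaledSwap R a b u) (scaledSwap R c d v) := by
  simp only [Commute, SemiconjBy, scaledSwap, diagonal_mul_permMatrix_mul_diagonal_mul_permMatrix]
  congr 2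
  · simp only [Pi.mulSingle_comp_equiv, symm_swap, swap_apply_of_ne_of_ne had.symm hbd.symm,
      swap_apply_of_ne_of_ne hbc hbd]
    exact (Pi.mulSingle_commute (f := fun _ : n => R) hbd u v).eq
  · rw [mul_swap_eq_swap_mul, swap_apply_of_ne_of_ne hac had, swap_apply_of_ne_of_ne hbc hbd]

end Matrix

open Matrix

theorem tymMatrix_eq_scaledSwap (n : ℕ) (i : Fin n) :
    tymMatrix n i = scaledSwap _ i.castSucc i.succ (T 1) := by
  have hne : i.castSucc ≠ i.succ := Fin.castSucc_lt_succ.ne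
  ext a b
  rcases eq_or_ne a i.castSucc with rfl | ha
  · simp [tymMatrix, scaledSwap, PEquiv.toMatrix_apply, hne, eq_comm]
  rcases eq_or_ne a i.succ with rfl | hb
  · simp [tymMatrix, scaledSwap, PEquiv.toMatrix_apply, hne.symm, eq_comm]
  · simp [tymMatrix, scaledSwap, PEquiv.toMatrix_apply, ha, hb, swap_apply_of_ne_of_ne]

/-- The Tong–Yang–Ma matrices define a group homomorphism from the braid group
`Br_{n+1} = G_{Aₙ}` to `GL_{n+1}(ℚ[u^{±1}])`: each matrix is invertible, and the matrices
satisfy the braid relations `ρ(σ_i)ρ(σ_{i+1})ρ(σ_i) = ρ(σ_{i+1})ρ(σ_i)ρ(σ_{i+1})` and the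
commutation relations `ρ(σ_i)ρ(σ_j) = ρ(σ_j)ρ(σ_i)` for `|i - j| ≥ 2`. -/
theorem stmt_18 (n : ℕ) :
    (∀ i : Fin n, IsUnit (tymMatrix n i)) ∧
    (∀ i j : Fin n, (i : ℕ) + 1 = (j : ℕ) →
      tymMatrix n i * tymMatrix n j * tymMatrix n i =
        tymMatrix n j * tymMatrix n i * tymMatrix n j) ∧
    (∀ i j : Fin n, (i : ℕ) + 2 ≤ (j : ℕ) →
      tymMatrix n i * tymMatrix n j = tymMatrix n j * tymMatrix n i) := by
  simp only [tymMatrix_eq_scaledSwap]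
  refine ⟨fun i => isUnit_scaledSwap _ _ (isUnit_T 1), fun i j hij => ?_, fun i j hij => ?_⟩
  · have hj : j.castSucc = i.succ := Fin.ext (by simp [← hij])
    rw [hj]
    exact scaledSwap_mul_scaledSwap_mul_scaledSwap Fin.castSucc_lt_succ.ne
      (Fin.ne_of_val_ne (by simp; omega)) (Fin.ne_of_val_ne (by simp; omega)) _
  · exact scaledSwap_commute (Fin.ne_of_val_ne (by simp; omega))
      (Fin.ne_of_val_ne (by simp; omega)) (Fin.ne_of_val_ne (by simp; omega))
      (Fin.ne_of_val_ne (by simp; omega)) _ _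
end
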